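/- Let K be a field, n ≥ 3, and let σ ∈ GL_n(K) be noncentral. If the characteristic polynomial of σ has a root in K, then there exist ρ, τ ∈ SL_n(K) such that t_{12}(1) = (ρ⁻¹σρ)·(τ⁻¹σ⁻¹τ). -/

import Mathlib

open Matrix

/-!
Let `σ u = a u` with `u ≠ 0`. For every covector `w` with `w ⬝ᵥ u = 0`, the commutator of `σ`
with the transvection `1 + u wᵀ` is the transvection `1 + u ψᵀ`, `ψ = wᵀ (a σ⁻¹ - 1)`. If all
these `ψ` vanish, then `a σ⁻¹ - 1 = u lᵀ` with `l ≠ 0` (as `σ` is not scalar), so every vector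
of `ker l` is an eigenvector for `a`. Since `n ≥ 3` we may pick a covector `w` with
`w ⬝ᵥ u ≠ 0` and a vector `v ≠ 0` orthogonal to both `w` and `l`; using `v` in place of `u`
gives `ψ = (w ⬝ᵥ u) l ≠ 0`. Finally, for `n ≥ 3` all transvections `1 + u ψᵀ` with `u, ψ ≠ 0`,
`ψ ⬝ᵥ u = 0` are conjugate to `t₁₂(1)` under `SL_n(K)`, and conjugating the commutator
`σ h σ⁻¹ h⁻¹` by `B ∈ SL_n(K)` gives `(B⁻¹ σ B) ((h⁻¹ B)⁻¹ σ⁻¹ (h⁻¹ B))`.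
-/

namespace Matrix

section CommRing

variable {ι R : Type*} [Fintype ι] [DecidableEq ι] [CommRing R]

theorem det_one_add_vecMulVec (v w : ι → R) : (1 + vecMulVec v w).det = 1 + w ⬝ᵥ v := by
  rw [vecMulVec_eq Unit, det_one_add_replicateCol_mul_replicateRow]

theorem mul_one_add_vecMulVec_mul {P Q : Matrix ι ι R} (h : P * Q = 1) (v w : ι → R) :
    P * (1 + vecMulVec v w) * Q = 1 + vecMulVec (P *ᵥ v) (w ᵥ* Q) := by
  rw [Matrix.mul_add, Matrix.mul_one, Matrix.add_mul, h, mul_vecMulVec, vecMulVec_mul]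

theorem one_add_vecMulVec_mul_one_sub_vecMulVec {v x : ι → R} (w : ι → R) (h : x ⬝ᵥ v = 0) :
    (1 + vecMulVec v x) * (1 - vecMulVec v w) = 1 + vecMulVec v (x - w) := by
  rw [Matrix.add_mul, Matrix.mul_sub, Matrix.mul_sub, vecMulVec_mul_vecMulVec, h, zero_smul,
    vecMulVec_zero, vecMulVec_sub, Matrix.one_mul, Matrix.mul_one, Matrix.one_mul]
  abel

theorem one_add_vecMulVec_mul_one_sub_vecMulVec_self {v w : ι → R} (h : w ⬝ᵥ v = 0) :
    (1 + vecMulVec v w) * (1 - vecMulVec v w) = 1 := by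
  rw [one_add_vecMulVec_mul_one_sub_vecMulVec w h, sub_self, vecMulVec_zero, add_zero]

theorem det_one_sub_vecMulVec {v w : ι → R} (h : w ⬝ᵥ v = 0) : (1 - vecMulVec v w).det = 1 := by
  rw [sub_eq_add_neg, ← vecMulVec_neg, det_one_add_vecMulVec, neg_dotProduct, h, neg_zero,
    add_zero]

theorem smul_inv_mulVec_eq_self_iff {σ : Matrix ι ι R} (hσ : IsUnit σ.det) {a : R}
    {v : ι → R} : (a • σ⁻¹) *ᵥ v = v ↔ σ *ᵥ v = a • v := by
  constructor
  · intro h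
    conv_lhs => rw [← h, mulVec_mulVec, Matrix.mul_smul, mul_nonsing_inv σ hσ, smul_mulVec,
      one_mulVec]
  · intro h
    rw [smul_mulVec, ← mulVec_smul, ← h, mulVec_mulVec, nonsing_inv_mul σ hσ, one_mulVec]

theorem commutator_one_add_vecMulVec {σ : Matrix ι ι R} (hσ : IsUnit σ.det) {v w : ι → R}
    {a : R} (hv : σ *ᵥ v = a • v) (hw : w ⬝ᵥ v = 0) :
    σ * (1 + vecMulVec v w) * σ⁻¹ * (1 - vecMulVec v w)
      = 1 + vecMulVec v (w ᵥ* (a • σ⁻¹ - 1)) := by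
  have hx : w ᵥ* (a • σ⁻¹) ⬝ᵥ v = 0 := by
    rw [← dotProduct_mulVec, (smul_inv_mulVec_eq_self_iff hσ).mpr hv, hw]
  rw [mul_one_add_vecMulVec_mul (mul_nonsing_inv σ hσ), hv, smul_vecMulVec, ← vecMulVec_smul,
    ← vecMul_smul, one_add_vecMulVec_mul_one_sub_vecMulVec w hx, vecMul_sub, vecMul_one]

theorem inv_mul_commutator_mul_eq {σ h h' B : Matrix ι ι R} (hB : IsUnit B.det)
    (hh : h * h' = 1) :
    B⁻¹ * (σ * h * σ⁻¹ * h') * B = (B⁻¹ * σ * B) * ((h' * B)⁻¹ * σ⁻¹ * (h' * B)) := by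
  have hinv : (h' * B)⁻¹ = B⁻¹ * h := by
    refine inv_eq_left_inv ?_
    rw [Matrix.mul_assoc, ← Matrix.mul_assoc h, hh, Matrix.one_mul, nonsing_inv_mul B hB]
  rw [hinv]
  simp only [Matrix.mul_assoc, mul_nonsing_inv_cancel_left B _ hB]

end CommRing

section Field

variable {ι K : Type*} [Fintype ι] [Field K]

theorem exists_ne_zero_dotProduct_eq_zero_pair (hι : 2 < Fintype.card ι) (u w : ι → K) :
    ∃ ξ ≠ 0, u ⬝ᵥ ξ = 0 ∧ w ⬝ᵥ ξ = 0 := by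
  have hker := LinearMap.ker_ne_bot_of_finrank_lt (f := (of ![u, w]).mulVecLin)
    (by simpa using hι)
  obtain ⟨ξ, hξ, hne⟩ := Submodule.exists_mem_ne_zero_of_ne_bot hker
  have h := LinearMap.mem_ker.mp hξ
  exact ⟨ξ, hne, by simpa using congrFun h 0, by simpa using congrFun h 1⟩

variable [DecidableEq ι]

theorem exists_mulVec_eq_smul_of_isRoot_charpoly {σ : Matrix ι ι K} {a : K}
    (h : σ.charpoly.IsRoot a) : ∃ v ≠ 0, σ *ᵥ v = a • v := by
  rw [← charpoly_toLin', ← Module.End.hasEigenvalue_iff_isRoot_charpoly] at h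
  obtain ⟨v, hv⟩ := h.exists_hasEigenvector
  exact ⟨v, hv.2, by simpa using hv.apply_eq_smul⟩

theorem exists_eq_vecMulVec_of_forall_vecMul_eq_zero {M : Matrix ι ι K} {u : ι → K}
    (hu : u ≠ 0) (h : ∀ φ, φ ⬝ᵥ u = 0 → φ ᵥ* M = 0) : ∃ l, M = vecMulVec u l := by
  obtain ⟨i₀, hi₀⟩ : ∃ i, u i ≠ 0 := Function.ne_iff.mp hu
  refine ⟨fun j => M i₀ j / u i₀, ?_⟩
  ext i j
  have hφ : (Pi.single i (u i₀) - Pi.single i₀ (u i)) ⬝ᵥ u = 0 := by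
    rw [sub_dotProduct, single_dotProduct, single_dotProduct]
    ring
  have hij := congrFun (h _ hφ) j
  rw [sub_vecMul, single_vecMul, single_vecMul] at hij
  simp only [Pi.sub_apply, Pi.smul_apply, row_apply, smul_eq_mul, Pi.zero_apply] at hij
  rw [vecMulVec_apply]
  field_simp
  linear_combination hij

theorem exists_eigenvector_dotProduct_eq_zero_vecMul_ne_zero {σ : Matrix ι ι K}
    (hσ : IsUnit σ.det) (hσc : ∀ b : K, σ ≠ b • 1) (hι : 2 < Fintype.card ι) {a : K}
    {u : ι → K} (hu : u ≠ 0) (hσu : σ *ᵥ u = a • u) :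
    ∃ v w : ι → K, v ≠ 0 ∧ σ *ᵥ v = a • v ∧ w ⬝ᵥ v = 0 ∧ w ᵥ* (a • σ⁻¹ - 1) ≠ 0 := by
  by_cases h : ∃ w, w ⬝ᵥ u = 0 ∧ w ᵥ* (a • σ⁻¹ - 1) ≠ 0
  · obtain ⟨w, hwu, hw⟩ := h
    exact ⟨u, w, hu, hσu, hwu, hw⟩
  push Not at h
  obtain ⟨l, hl⟩ := exists_eq_vecMulVec_of_forall_vecMul_eq_zero hu h
  have hl0 : l ≠ 0 := by
    rintro rfl
    refine hσc a ?_
    rw [vecMulVec_zero, sub_eq_zero] at hl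
    calc σ = σ * (a • σ⁻¹) := by rw [hl, Matrix.mul_one]
      _ = a • 1 := by rw [Matrix.mul_smul, mul_nonsing_inv σ hσ]
  obtain ⟨i, hi⟩ : ∃ i, u i ≠ 0 := Function.ne_iff.mp hu
  obtain ⟨v, hv, hiv, hlv⟩ := exists_ne_zero_dotProduct_eq_zero_pair hι (Pi.single i 1) l
  refine ⟨v, Pi.single i 1, hv, ?_, hiv, ?_⟩
  · have hlv' : (a • σ⁻¹ - 1) *ᵥ v = 0 := by
      rw [hl, vecMulVec_mulVec, hlv, MulOpposite.op_zero, zero_smul]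
    rwa [sub_mulVec, one_mulVec, sub_eq_zero, smul_inv_mulVec_eq_self_iff hσ] at hlv'
  · rw [hl, vecMul_vecMulVec, single_dotProduct, one_mul]
    exact smul_ne_zero hi hl0

theorem exists_apply_eq_one_dotProduct_ne_zero {u : ι → K} (hu : u ≠ 0) (i : ι) :
    ∃ y : ι → K, y i = 1 ∧ y ⬝ᵥ u ≠ 0 := by
  by_cases hi : u i = 0
  · obtain ⟨m, hm⟩ : ∃ m, u m ≠ 0 := Function.ne_iff.mp hu
    have hmi : m ≠ i := by
      rintro rfl
      exact hm hi
    refine ⟨Pi.single i 1 + Pi.single m 1, by simp [hmi], ?_⟩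
    simpa [add_dotProduct, hi] using hm
  · exact ⟨Pi.single i 1, by simp, by simpa using hi⟩

theorem exists_isUnit_det_mulVec_single_eq {u : ι → K} (hu : u ≠ 0) (i : ι) {c : ι → K}
    (hc : c ⬝ᵥ u = c i) :
    ∃ g : Matrix ι ι K, IsUnit g.det ∧ g *ᵥ Pi.single i 1 = u ∧ c ᵥ* g = c := by
  obtain ⟨y, hyi, hyu⟩ := exists_apply_eq_one_dotProduct_ne_zero hu i
  refine ⟨1 + vecMulVec (u - Pi.single i 1) y, ?_, ?_, ?_⟩
  · rw [det_one_add_vecMulVec, dotProduct_sub, dotProduct_single, hyi]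
    simpa using hyu
  · rw [add_mulVec, vecMulVec_mulVec, dotProduct_single, hyi, one_mulVec]
    simp
  · rw [vecMul_add, vecMul_vecMulVec, dotProduct_sub, dotProduct_single, hc, vecMul_one]
    simp

theorem exists_isUnit_det_mulVec_single_eq_vecMul_eq_single {i j : ι} (hij : i ≠ j)
    {u ψ : ι → K} (hu : u ≠ 0) (hψ : ψ ≠ 0) (h : ψ ⬝ᵥ u = 0) :
    ∃ B : Matrix ι ι K, IsUnit B.det ∧ B *ᵥ Pi.single i 1 = u ∧ ψ ᵥ* B = Pi.single j 1 := by
  obtain ⟨g, hg, hgi, -⟩ := exists_isUnit_det_mulVec_single_eq hu i (c := 0) (by simp)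
  have hφ : ψ ᵥ* g ≠ 0 := by
    intro h0
    refine hψ ?_
    rw [← vecMul_one ψ, ← mul_nonsing_inv g hg, ← vecMul_vecMul, h0, zero_vecMul]
  have hφi : Pi.single i 1 ⬝ᵥ ψ ᵥ* g = (Pi.single i 1 : ι → K) j := by
    rw [dotProduct_comm, ← dotProduct_mulVec, hgi, h, Pi.single_eq_of_ne hij.symm]
  -- `g'ᵀ` fixes `eᵢ` and sends the row `eⱼ` to `ψ g`, so `g g'ᵀ⁻¹` does the job.
  obtain ⟨g', hg', hg'j, hg'i⟩ := exists_isUnit_det_mulVec_single_eq hφ j hφi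
  have hg'T : IsUnit g'ᵀ.det := by rwa [det_transpose]
  have hTi : g'ᵀ⁻¹ *ᵥ Pi.single i 1 = Pi.single i 1 := by
    conv_lhs => rw [← hg'i, ← mulVec_transpose, mulVec_mulVec, nonsing_inv_mul _ hg'T, one_mulVec]
  refine ⟨g * g'ᵀ⁻¹, ?_, ?_, ?_⟩
  · rw [det_mul]
    exact hg.mul (isUnit_nonsing_inv_det _ hg'T)
  · rw [← mulVec_mulVec, hTi, hgi]
  · rw [← vecMul_vecMul, ← hg'j, ← vecMul_transpose, vecMul_vecMul, mul_nonsing_inv _ hg'T,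
      vecMul_one]

theorem exists_det_eq_one_mulVec_single_eq_vecMul_eq_single {i j k : ι} (hij : i ≠ j)
    (hik : i ≠ k) (hjk : j ≠ k) {u ψ : ι → K} (hu : u ≠ 0) (hψ : ψ ≠ 0) (h : ψ ⬝ᵥ u = 0) :
    ∃ B : Matrix ι ι K, B.det = 1 ∧ B *ᵥ Pi.single i 1 = u ∧ ψ ᵥ* B = Pi.single j 1 := by
  obtain ⟨B, hB, hBi, hBj⟩ := exists_isUnit_det_mulVec_single_eq_vecMul_eq_single hij hu hψ h
  refine ⟨B * diagonal (Function.update 1 k B.det⁻¹), ?_, ?_, ?_⟩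
  · rw [det_mul, det_diagonal, Finset.prod_update_of_mem (Finset.mem_univ k)]
    simp [hB.ne_zero]
  · rw [← mulVec_mulVec, diagonal_mulVec_single, Function.update_of_ne hik, Pi.one_apply,
      one_mul, hBi]
  · rw [← vecMul_vecMul, hBj, single_vecMul_diagonal, Function.update_of_ne hjk, Pi.one_apply,
      mul_one]

theorem exists_det_eq_one_conj_eq_transvection {i j k : ι} (hij : i ≠ j) (hik : i ≠ k)
    (hjk : j ≠ k) {u ψ : ι → K} (hu : u ≠ 0) (hψ : ψ ≠ 0) (h : ψ ⬝ᵥ u = 0) :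
    ∃ B : Matrix ι ι K, B.det = 1 ∧ B⁻¹ * (1 + vecMulVec u ψ) * B = transvection i j 1 := by
  obtain ⟨B, hB, hBi, hBj⟩ :=
    exists_det_eq_one_mulVec_single_eq_vecMul_eq_single hij hik hjk hu hψ h
  have hBu : IsUnit B.det := hB ▸ isUnit_one
  have hBinv : B⁻¹ *ᵥ u = Pi.single i 1 := by
    rw [← hBi, mulVec_mulVec, nonsing_inv_mul B hBu, one_mulVec]
  refine ⟨B, hB, ?_⟩
  rw [mul_one_add_vecMulVec_mul (nonsing_inv_mul B hBu), hBinv, hBj, transvection,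
    single_eq_single_vecMulVec_single]

end Field

end Matrix

theorem stmt3 {n : ℕ} (hn : 3 ≤ n) {K : Type*} [Field K]
    (σ : Matrix (Fin n) (Fin n) K) (hσ : IsUnit σ.det)
    (hnoncentral : ∀ a : K, σ ≠ a • (1 : Matrix (Fin n) (Fin n) K))
    (hroot : ∃ a : K, σ.charpoly.IsRoot a) :
    ∃ ρ τ : Matrix (Fin n) (Fin n) K, ρ.det = 1 ∧ τ.det = 1 ∧
      Matrix.transvection (⟨0, by omega⟩ : Fin n) (⟨1, by omega⟩ : Fin n) (1 : K)
        = (ρ⁻¹ * σ * ρ) * (τ⁻¹ * σ⁻¹ * τ) := by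
  obtain ⟨a, ha⟩ := hroot
  obtain ⟨u, hu, hσu⟩ := exists_mulVec_eq_smul_of_isRoot_charpoly ha
  obtain ⟨v, w, hv, hσv, hwv, hψ⟩ :=
    exists_eigenvector_dotProduct_eq_zero_vecMul_ne_zero hσ hnoncentral (by simp; omega) hu hσu
  have hψv : w ᵥ* (a • σ⁻¹ - 1) ⬝ᵥ v = 0 := by
    rw [← dotProduct_mulVec, sub_mulVec, (smul_inv_mulVec_eq_self_iff hσ).mpr hσv, one_mulVec,
      sub_self, dotProduct_zero]
  obtain ⟨B, hB, hBconj⟩ := exists_det_eq_one_conj_eq_transvection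
    (i := ⟨0, by omega⟩) (j := ⟨1, by omega⟩) (k := ⟨2, by omega⟩) (by simp [Fin.ext_iff]) (by simp [Fin.ext_iff])
    (by simp [Fin.ext_iff])
    hv hψ hψv
  refine ⟨B, (1 - vecMulVec v w) * B, hB, by rw [det_mul, det_one_sub_vecMulVec hwv, hB, one_mul],
    ?_⟩
  rw [← hBconj, ← commutator_one_add_vecMulVec hσ hσv hwv,
    inv_mul_commutator_mul_eq (hB ▸ isUnit_one) (one_add_vecMulVec_mul_one_sub_vecMulVec_self hwv)]
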